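/- arXiv:2306.12565 — 5 statements merged into one kernel-verified Lean document; each statement's English description precedes it below -/
import Mathlib

section
/- For every positive integer n and every real number m such that cos((2n+1)m) ≠ 0 and cos(πj/(2n+1) + m) ≠ 0 for all j with 0 ≤ j ≤ 2n, the finite sum ∑_{j=0}^{2n} (-1)^j · sec(πj/(2n+1) + m) equals (-1)^n · (2n+1) · sec((2n+1)m). -/
open Real Finset
lemma cos_add_nat_pi (y : ℝ) (j : ℕ) : Real.cos (y + j * Real.pi) = (-1:ℝ)^j * Real.cos y := by
  induction j with
  | zero => simp
  | succ j ih =>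
    have : y + (j+1:ℕ) * Real.pi = (y + j * Real.pi) + Real.pi := by push_cast; ring
    rw [this, Real.cos_add_pi, ih, pow_succ]; ring

lemma cosA (n : ℕ) (x : ℝ) :
    Real.cos ((2*n+1)*x) = (-1:ℝ)^n * (Real.cos x +
      ∑ k ∈ Finset.range n, 2*(-1:ℝ)^(k+1) * Real.cos x * Real.cos ((2*((k:ℝ)+1))*x)) := by
  induction n with
  | zero => simp
  | succ n ih =>
    rw [Finset.sum_range_succ]
    have h2 : Real.cos ((2*((n:ℝ)+1)+1)*x) + Real.cos ((2*(n:ℝ)+1)*x)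
        = 2 * Real.cos ((2*((n:ℝ)+1))*x) * Real.cos x := by
      rw [Real.cos_add_cos]; ring_nf
    have hc : ((-1:ℝ)^n) * ((-1:ℝ)^n) = 1 := by
      rw [← pow_add]; exact Even.neg_one_pow ⟨n, rfl⟩
    push_cast at *
    rw [pow_succ]
    linear_combination h2 - ih - 2 * Real.cos x * Real.cos ((2*((n:ℝ)+1))*x) * hc

lemma cosB (N k : ℕ) (a : ℝ) (hk : 0 < k) (hkN : k < N) :
    ∑ j ∈ Finset.range N, Real.cos (a + 2*Real.pi*k*j/N) = 0 := by
  have hNpos : 0 < N := lt_trans hk hkN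
  have hN0 : (N:ℝ) ≠ 0 := Nat.cast_ne_zero.mpr (by omega)
  have hNc : (N:ℂ) ≠ 0 := Nat.cast_ne_zero.mpr (by omega)
  set ζ : ℂ := Complex.exp ((2*Real.pi*k/N : ℝ) * Complex.I) with hζ
  have hζN : ζ ^ N = 1 := by
    rw [hζ, ← Complex.exp_nat_mul]
    have : (N:ℂ) * (((2*Real.pi*k/N : ℝ)) * Complex.I) = (k:ℤ) * (2*Real.pi*Complex.I) := by
      push_cast; field_simp
    rw [this]
    exact Complex.exp_int_mul_two_pi_mul_I k
  have hπ : (0:ℝ) < Real.pi := Real.pi_pos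
  have hζ1 : ζ ≠ 1 := by
    rw [hζ, Ne, Complex.exp_eq_one_iff]
    rintro ⟨t, ht⟩
    have h3 : 2*Real.pi*k/N = t * (2*Real.pi) := by
      have := congrArg Complex.im ht
      simpa using this
    have h4 : (k:ℝ) = t * N := by
      field_simp at h3
      nlinarith [h3]
    have h5 : (k:ℤ) = t * N := by exact_mod_cast h4
    have hk' : (0:ℤ) < k := by exact_mod_cast hk
    have hkN' : (k:ℤ) < N := by exact_mod_cast hkN
    have hN' : (0:ℤ) < N := by exact_mod_cast hNpos
    rcases (by omega : t = 0 ∨ 1 ≤ t ∨ t ≤ -1) with h | h | h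
    · simp [h] at h5; omega
    · nlinarith [mul_nonneg (by linarith : (0:ℤ) ≤ t - 1) (le_of_lt hN')]
    · nlinarith [mul_nonneg (by linarith : (0:ℤ) ≤ -1 - t) (le_of_lt hN')]
  have hsum : ∑ j ∈ Finset.range N, Complex.exp (((a + 2*Real.pi*k*j/N : ℝ)) * Complex.I) = 0 := by
    have heach : ∀ j ∈ Finset.range N,
        Complex.exp (((a + 2*Real.pi*k*j/N : ℝ)) * Complex.I)
          = Complex.exp ((a:ℝ) * Complex.I) * ζ ^ j := by
      intro j _
      rw [hζ, ← Complex.exp_nat_mul, ← Complex.exp_add]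
      congr 1
      push_cast
      field_simp
    rw [Finset.sum_congr rfl heach, ← Finset.mul_sum, geom_sum_eq hζ1, hζN]
    simp
  have hre : ∑ j ∈ Finset.range N, Real.cos (a + 2*Real.pi*k*j/N)
      = (∑ j ∈ Finset.range N, Complex.exp (((a + 2*Real.pi*k*j/N : ℝ)) * Complex.I)).re := by
    rw [Complex.re_sum]
    exact Finset.sum_congr rfl fun j _ => (Complex.exp_ofReal_mul_I_re _).symm
  rw [hre, hsum]
  simp


theorem secant_degenerate_case (n : ℕ) (hn : 0 < n) (m : ℝ)
    (h0 : Real.cos ((2 * n + 1) * m) ≠ 0)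
    (h1 : ∀ j ≤ 2 * n, Real.cos (Real.pi * j / (2 * n + 1) + m) ≠ 0) :
    ∑ j ∈ Finset.range (2 * n + 1),
      (-1 : ℝ) ^ j * (Real.cos (Real.pi * j / (2 * n + 1) + m))⁻¹
    = (-1 : ℝ) ^ n * (2 * n + 1) * (Real.cos ((2 * n + 1) * m))⁻¹ := by
  have hden : (2*(n:ℝ)+1) ≠ 0 := by positivity
  have hstep : ∀ j ∈ Finset.range (2*n+1),
      (-1 : ℝ) ^ j * (Real.cos (Real.pi * j / (2 * n + 1) + m))⁻¹ * Real.cos ((2 * n + 1) * m)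
      = (-1:ℝ)^n * (1 + ∑ k ∈ Finset.range n,
          2*(-1:ℝ)^(k+1) * Real.cos ((2*((k:ℝ)+1)) * (Real.pi * j / (2 * n + 1) + m))) := by
    intro j hj
    have hjle : j ≤ 2*n := by have := Finset.mem_range.mp hj; omega
    have hx : Real.cos (Real.pi * j / (2 * n + 1) + m) ≠ 0 := h1 j hjle
    set X : ℝ := Real.pi * j / (2 * n + 1) + m with hX
    have hxarg : (2*(n:ℝ)+1) * X = (2*(n:ℝ)+1)*m + j*Real.pi := by
      rw [hX]; field_simp; ring
    have hcN : Real.cos ((2*(n:ℝ)+1) * X) = (-1:ℝ)^j * Real.cos ((2*(n:ℝ)+1)*m) := by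
      rw [hxarg, cos_add_nat_pi]
    have hS : (∑ k ∈ Finset.range n, 2*(-1:ℝ)^(k+1) * Real.cos X * Real.cos ((2*((k:ℝ)+1)) * X))
        = Real.cos X * ∑ k ∈ Finset.range n, 2*(-1:ℝ)^(k+1) * Real.cos ((2*((k:ℝ)+1)) * X) := by
      rw [Finset.mul_sum]; exact Finset.sum_congr rfl fun k _ => by ring
    have key : Real.cos ((2*(n:ℝ)+1) * X) = (-1:ℝ)^n * (Real.cos X +
        Real.cos X * ∑ k ∈ Finset.range n, 2*(-1:ℝ)^(k+1) * Real.cos ((2*((k:ℝ)+1)) * X)) := by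
      rw [cosA n X, hS]
    have hinv : Real.cos X * (Real.cos X)⁻¹ = 1 := mul_inv_cancel₀ hx
    set T : ℝ := ∑ k ∈ Finset.range n, 2*(-1:ℝ)^(k+1) * Real.cos ((2*((k:ℝ)+1)) * X) with hT
    linear_combination (Real.cos X)⁻¹ * key - (Real.cos X)⁻¹ * hcN
      + ((-1:ℝ)^n + (-1:ℝ)^n * T) * hinv
  have hzero : ∀ k ∈ Finset.range n,
      ∑ j ∈ Finset.range (2*n+1),
        Real.cos ((2*((k:ℝ)+1)) * (Real.pi * j / (2 * n + 1) + m)) = 0 := by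
    intro k hk
    have hkn : k < n := Finset.mem_range.mp hk
    have := cosB (2*n+1) (k+1) (2*((k:ℝ)+1)*m) (by omega) (by omega)
    rw [← this]
    refine Finset.sum_congr rfl fun j _ => ?_
    congr 1
    push_cast
    field_simp
    ring
  have hmain : (∑ j ∈ Finset.range (2*n+1),
      (-1 : ℝ) ^ j * (Real.cos (Real.pi * j / (2 * n + 1) + m))⁻¹) * Real.cos ((2 * n + 1) * m)
      = (-1:ℝ)^n * (2*(n:ℝ)+1) := by
    rw [Finset.sum_mul, Finset.sum_congr rfl hstep, ← Finset.mul_sum]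
    congr 1
    rw [Finset.sum_add_distrib, Finset.sum_comm]
    have : ∀ k ∈ Finset.range n, ∑ j ∈ Finset.range (2*n+1),
        2*(-1:ℝ)^(k+1) * Real.cos ((2*((k:ℝ)+1)) * (Real.pi * j / (2 * n + 1) + m)) = 0 := by
      intro k hk
      rw [← Finset.mul_sum, hzero k hk, mul_zero]
    rw [Finset.sum_congr rfl this]
    simp
  rw [← hmain, mul_inv_cancel_right₀ h0]
end

section
/- For every positive integer n and real numbers m, r such that all denominators are nonzero, ∏_{j=0}^{2n} [ (cos((m + 2πj/(2n+1) + r)/2) + sin((m−r)/2)) / (cos((m(2n+1) + 2πj + r(2n+1))/(2(2n+1))) − sin((m−r)/2)) ]^{(−1)^j} = [ − sin((m(4n+2)+π)/4) / ( tan((π + 2r + 4nr)/4) · sin(m(2n+1)/2 − π/4) ) ]^{(−1)^n}. -/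
open Real Finset


lemma prod_sub_primroot {N : ℕ} (hN : 0 < N) {ζ : ℂ} (hζ : IsPrimitiveRoot ζ N) (z : ℂ) :
    ∏ k ∈ Finset.range N, (z - ζ ^ k) = z ^ N - 1 := by
  have : NeZero N := ⟨hN.ne'⟩
  have h := Polynomial.X_pow_sub_one_eq_prod hN hζ
  have h2 := congrArg (Polynomial.eval z) h
  simp only [Polynomial.eval_prod, Polynomial.eval_sub, Polynomial.eval_pow, Polynomial.eval_X,
    Polynomial.eval_one, Polynomial.eval_C] at h2
  rw [h2]
  have himg : Polynomial.nthRootsFinset N (1 : ℂ) = (Finset.range N).image (ζ ^ ·) := by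
    ext x
    simp only [Polynomial.mem_nthRootsFinset hN (1 : ℂ), Finset.mem_image, Finset.mem_range]
    constructor
    · intro hx
      obtain ⟨i, hi, rfl⟩ := hζ.eq_pow_of_pow_eq_one hx
      exact ⟨i, hi, rfl⟩
    · rintro ⟨i, hi, rfl⟩
      rw [← pow_mul, mul_comm i N, pow_mul, hζ.pow_eq_one, one_pow]
  rw [himg, Finset.prod_image]
  intro i hi j hj hij
  exact hζ.pow_inj (Finset.mem_range.mp hi) (Finset.mem_range.mp hj) hij


lemma prod_one_sub_primroot (n : ℕ) {ζ : ℂ} (hζ : IsPrimitiveRoot ζ (2 * n + 1)) (z : ℂ) :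
    ∏ k ∈ Finset.range (2 * n + 1), (1 - z * ζ ^ k) = 1 - z ^ (2 * n + 1) := by
  have hζi : IsPrimitiveRoot ζ⁻¹ (2 * n + 1) := hζ.inv
  have hz : ζ ≠ 0 := hζ.ne_zero (Nat.succ_ne_zero _)
  have key : ∀ k, (1 : ℂ) - z * ζ ^ k = -ζ ^ k * (z - (ζ⁻¹) ^ k) := by
    intro k
    have : (ζ : ℂ) ^ k * (ζ⁻¹) ^ k = 1 := by
      rw [← mul_pow, mul_inv_cancel₀ hz, one_pow]
    ring_nf
    rw [inv_pow]
    field_simp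
    ring
  calc ∏ k ∈ Finset.range (2 * n + 1), (1 - z * ζ ^ k)
      = ∏ k ∈ Finset.range (2 * n + 1), (-ζ ^ k * (z - (ζ⁻¹) ^ k)) := by
        exact Finset.prod_congr rfl fun k _ => key k
    _ = (∏ k ∈ Finset.range (2 * n + 1), (-ζ ^ k)) *
        ∏ k ∈ Finset.range (2 * n + 1), (z - (ζ⁻¹) ^ k) := Finset.prod_mul_distrib
    _ = (-1) * (z ^ (2 * n + 1) - 1) := by
        rw [prod_sub_primroot (Nat.succ_pos _) hζi z]
        congr 1
        have h1 : ∏ k ∈ Finset.range (2 * n + 1), (-ζ ^ k)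
            = ∏ k ∈ Finset.range (2 * n + 1), (-1) * ζ ^ k :=
          Finset.prod_congr rfl fun k _ => by ring
        rw [h1, Finset.prod_mul_distrib, Finset.prod_const, Finset.card_range,
          Finset.prod_pow_eq_pow_sum]
        have hsum : (∑ k ∈ Finset.range (2 * n + 1), k) = (2 * n + 1) * n := by
          have h2 := Finset.sum_range_id_mul_two (2 * n + 1)
          have h3 : (2 * n + 1) - 1 = 2 * n := by omega
          rw [h3] at h2
          have h4 : (2 * n + 1) * (2 * n) = ((2 * n + 1) * n) * 2 := by ring
          omega
        rw [hsum, pow_mul, hζ.pow_eq_one, one_pow, Odd.neg_one_pow ⟨n, by ring⟩, mul_one]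
    _ = 1 - z ^ (2 * n + 1) := by ring


lemma sum_range_odd (n : ℕ) : (∑ k ∈ Finset.range (2 * n + 1), k) = (2 * n + 1) * n := by
  have h2 := Finset.sum_range_id_mul_two (2 * n + 1)
  have h3 : (2 * n + 1) - 1 = 2 * n := by omega
  rw [h3] at h2
  have h4 : (2 * n + 1) * (2 * n) = ((2 * n + 1) * n) * 2 := by ring
  omega

lemma complex_sin_prod (n : ℕ) (x : ℂ) :
    ∏ k ∈ Finset.range (2 * n + 1),
      Complex.sin (x + k * ((Real.pi : ℂ) / (2 * n + 1)))
    = Complex.sin ((2 * n + 1) * x) / 2 ^ (2 * n) := by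
  set π' : ℂ := (Real.pi : ℂ) with hπ'
  have hNne : ((2 * n + 1 : ℕ) : ℂ) ≠ 0 := Nat.cast_ne_zero.mpr (Nat.succ_ne_zero _)
  have hNc : ((2 * n + 1 : ℕ) : ℂ) = 2 * (n : ℂ) + 1 := by push_cast; ring
  set z : ℂ := Complex.exp (2 * x * Complex.I) with hz
  set ζ : ℂ := Complex.exp (2 * π' * Complex.I / (2 * n + 1 : ℕ)) with hζdef
  have hζ : IsPrimitiveRoot ζ (2 * n + 1) := Complex.isPrimitiveRoot_exp _ (Nat.succ_ne_zero _)
  have hterm : ∀ k : ℕ,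
      Complex.sin (x + k * (π' / (2 * (n : ℂ) + 1)))
      = Complex.I / 2 * Complex.exp (-(x + k * (π' / (2 * (n : ℂ) + 1))) * Complex.I)
          * (1 - z * ζ ^ k) := by
    intro k
    set θ : ℂ := x + k * (π' / (2 * (n : ℂ) + 1)) with hθ
    have e1 : Complex.exp (θ * Complex.I)
        = Complex.exp (-θ * Complex.I) * (z * ζ ^ k) := by
      rw [← Complex.exp_nat_mul, ← Complex.exp_add, ← Complex.exp_add]
      congr 1
      rw [hθ, hNc]
      field_simp
      ring
    rw [Complex.sin, e1]
    ring
  have hprod :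
      ∏ k ∈ Finset.range (2 * n + 1),
        Complex.sin (x + k * (π' / (2 * (n : ℂ) + 1)))
      = (Complex.I / 2) ^ (2 * n + 1)
        * Complex.exp (-(((2 * n + 1 : ℂ)) * x + (n : ℂ) * π') * Complex.I)
        * (1 - z ^ (2 * n + 1)) := by
    rw [Finset.prod_congr rfl fun k _ => hterm k]
    rw [Finset.prod_mul_distrib, Finset.prod_mul_distrib, Finset.prod_const, Finset.card_range,
      prod_one_sub_primroot n hζ, ← Complex.exp_sum]
    congr 2
    congr 1
    have hlin : ∀ k ∈ Finset.range (2 * n + 1),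
        -(x + (k : ℂ) * (π' / (2 * (n : ℂ) + 1))) * Complex.I
        = -(x * Complex.I) + (k : ℂ) * (-(π' / (2 * (n : ℂ) + 1) * Complex.I)) :=
      fun k _ => by ring
    rw [Finset.sum_congr rfl hlin, Finset.sum_add_distrib, Finset.sum_const, Finset.card_range,
      ← Finset.sum_mul]
    have hNne' : (2 * (n : ℂ) + 1) ≠ 0 := hNc ▸ hNne
    have hcast : (∑ k ∈ Finset.range (2 * n + 1), (k : ℂ)) = ((2 * n + 1) * n : ℕ) := by
      rw [← Nat.cast_sum, sum_range_odd]
    rw [hcast, nsmul_eq_mul]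
    push_cast
    field_simp
    ring
  rw [hprod]
  have hsin : Complex.sin ((2 * (n : ℂ) + 1) * x)
      = Complex.I / 2 * Complex.exp (-((2 * (n : ℂ) + 1) * x) * Complex.I)
        * (1 - z ^ (2 * n + 1)) := by
    have hzz : Complex.exp (-((2 * (n : ℂ) + 1) * x) * Complex.I) * z ^ (2 * n + 1)
        = Complex.exp ((2 * (n : ℂ) + 1) * x * Complex.I) := by
      rw [hz, ← Complex.exp_nat_mul, ← Complex.exp_add]
      congr 1
      push_cast
      ring
    rw [Complex.sin]
    linear_combination (Complex.I / 2) * hzz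
  have h1 : Complex.exp (-((2 * (n : ℂ) + 1) * x + (n : ℂ) * π') * Complex.I)
      = Complex.exp (-((2 * (n : ℂ) + 1) * x) * Complex.I) * (-1) ^ n := by
    rw [show (-((2 * (n : ℂ) + 1) * x + (n : ℂ) * π') * Complex.I)
        = -((2 * (n : ℂ) + 1) * x) * Complex.I + (n : ℂ) * (-(π' * Complex.I)) by ring,
      Complex.exp_add]
    congr 1
    rw [Complex.exp_nat_mul, Complex.exp_neg, hπ', Complex.exp_pi_mul_I]
    norm_num
  have hI : (Complex.I / 2) ^ (2 * n + 1) * (-1 : ℂ) ^ n = Complex.I / 2 / 2 ^ (2 * n) := by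
    calc (Complex.I / 2) ^ (2 * n + 1) * (-1 : ℂ) ^ n
        = ((Complex.I ^ 2 / 2 ^ 2) ^ n) * (Complex.I / 2) * (-1) ^ n := by
          rw [pow_succ, pow_mul, div_pow]
      _ = ((-1 : ℂ) / 4) ^ n * (Complex.I / 2) * (-1) ^ n := by norm_num [Complex.I_sq]
      _ = (((-1 : ℂ) / 4) * (-1)) ^ n * (Complex.I / 2) := by rw [mul_pow]; ring
      _ = ((1 : ℂ) / 4) ^ n * (Complex.I / 2) := by norm_num
      _ = Complex.I / 2 / 2 ^ (2 * n) := by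
          rw [pow_mul, div_pow, one_pow]
          norm_num
          ring
  calc (Complex.I / 2) ^ (2 * n + 1)
        * Complex.exp (-((2 * (n : ℂ) + 1) * x + (n : ℂ) * π') * Complex.I)
        * (1 - z ^ (2 * n + 1))
      = ((Complex.I / 2) ^ (2 * n + 1) * (-1 : ℂ) ^ n)
        * (Complex.exp (-((2 * (n : ℂ) + 1) * x) * Complex.I) * (1 - z ^ (2 * n + 1))) := by
        rw [h1]; ring
    _ = (Complex.I / 2 / 2 ^ (2 * n))
        * (Complex.exp (-((2 * (n : ℂ) + 1) * x) * Complex.I) * (1 - z ^ (2 * n + 1))) := by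
        rw [hI]
    _ = Complex.sin ((2 * (n : ℂ) + 1) * x) / 2 ^ (2 * n) := by rw [hsin]; ring


lemma real_sin_prod (n : ℕ) (x : ℝ) :
    ∏ k ∈ Finset.range (2 * n + 1), Real.sin (x + k * (Real.pi / (2 * n + 1)))
    = Real.sin ((2 * n + 1) * x) / 2 ^ (2 * n) := by
  have h := complex_sin_prod n (x : ℂ)
  apply Complex.ofReal_injective
  push_cast [Complex.ofReal_sin]
  convert h using 2

lemma real_cos_prod (n : ℕ) (x : ℝ) :
    ∏ k ∈ Finset.range (2 * n + 1), Real.cos (x + k * (Real.pi / (2 * n + 1)))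
    = (-1) ^ n * Real.cos ((2 * n + 1) * x) / 2 ^ (2 * n) := by
  have h := real_sin_prod n (x + Real.pi / 2)
  have h1 : ∀ k ∈ Finset.range (2 * n + 1),
      Real.sin (x + Real.pi / 2 + k * (Real.pi / (2 * n + 1)))
      = Real.cos (x + k * (Real.pi / (2 * n + 1))) := fun k _ => by
    rw [show x + Real.pi / 2 + k * (Real.pi / (2 * n + 1))
        = x + k * (Real.pi / (2 * n + 1)) + Real.pi / 2 by ring, Real.sin_add_pi_div_two]
  rw [Finset.prod_congr rfl h1] at h
  rw [h, show (2 * (n : ℝ) + 1) * (x + Real.pi / 2)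
      = (2 * (n : ℝ) + 1) * x + Real.pi / 2 + n * Real.pi by ring,
    Real.sin_add_nat_mul_pi, Real.sin_add_pi_div_two]

lemma cot_prod (n : ℕ) (x : ℝ) :
    ∏ k ∈ Finset.range (2 * n + 1),
      (Real.cos (x + k * (Real.pi / (2 * n + 1))) / Real.sin (x + k * (Real.pi / (2 * n + 1))))
    = (-1) ^ n * (Real.cos ((2 * n + 1) * x) / Real.sin ((2 * n + 1) * x)) := by
  rw [Finset.prod_div_distrib, real_cos_prod, real_sin_prod, div_div_div_comm,
    div_self (by positivity : (2 : ℝ) ^ (2 * n) ≠ 0), div_one]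
  ring

lemma alt_prod (g : ℕ → ℝ) (k : ℕ) :
    ∏ j ∈ Finset.range (2 * k + 1), g j ^ ((-1 : ℤ) ^ j)
    = (∏ i ∈ Finset.range (k + 1), g (2 * i)) * (∏ i ∈ Finset.range k, g (2 * i + 1))⁻¹ := by
  induction k with
  | zero => simp
  | succ k ih =>
    have e : 2 * (k + 1) + 1 = (2 * k + 1) + 1 + 1 := by ring
    rw [e, Finset.prod_range_succ, Finset.prod_range_succ, ih]
    rw [show (2 * k + 1 : ℕ) + 1 = 2 * (k + 1) by ring]
    rw [show ((-1 : ℤ) ^ (2 * k + 1)) = -1 by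
      rw [Odd.neg_one_pow ⟨k, by ring⟩]]
    rw [show ((-1 : ℤ) ^ (2 * (k + 1))) = 1 by
      rw [Even.neg_one_pow ⟨k + 1, by ring⟩]]
    rw [zpow_neg_one, zpow_one]
    rw [Finset.prod_range_succ (fun i => g (2 * i)) k,
      Finset.prod_range_succ (fun i => g (2 * i + 1)) k,
      Finset.prod_range_succ (fun i => g (2 * i)) (k + 1),
      Finset.prod_range_succ (fun i => g (2 * i)) k, mul_inv]
    ring


lemma cotF (n : ℕ) (x : ℝ) :
    ∏ j ∈ Finset.range (2 * n + 1),
      (Real.cos (x + j * (Real.pi / (2 * (2 * n + 1)))) /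
        Real.sin (x + j * (Real.pi / (2 * (2 * n + 1))))) ^ ((-1 : ℤ) ^ j)
    = Real.cos ((2 * n + 1) * x) / Real.sin ((2 * n + 1) * x) := by
  have h2n1 : (2 * (n : ℝ) + 1) ≠ 0 := by positivity
  rw [alt_prod (fun j => Real.cos (x + j * (Real.pi / (2 * (2 * n + 1)))) /
        Real.sin (x + j * (Real.pi / (2 * (2 * n + 1))))) n]
  have he : (∏ i ∈ Finset.range (n + 1),
      (Real.cos (x + (2 * i : ℕ) * (Real.pi / (2 * (2 * n + 1)))) /
        Real.sin (x + (2 * i : ℕ) * (Real.pi / (2 * (2 * n + 1))))))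
      = ∏ i ∈ Finset.range (n + 1),
        (Real.cos (x + i * (Real.pi / (2 * n + 1))) /
          Real.sin (x + i * (Real.pi / (2 * n + 1)))) := by
    refine Finset.prod_congr rfl fun i _ => ?_
    rw [show ((2 * i : ℕ) : ℝ) * (Real.pi / (2 * (2 * (n : ℝ) + 1)))
        = (i : ℝ) * (Real.pi / (2 * (n : ℝ) + 1)) by push_cast; field_simp]
  have ho : (∏ i ∈ Finset.range n,
      (Real.cos (x + (2 * i + 1 : ℕ) * (Real.pi / (2 * (2 * n + 1)))) /
        Real.sin (x + (2 * i + 1 : ℕ) * (Real.pi / (2 * (2 * n + 1))))))⁻¹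
      = (-1) ^ n * ∏ i ∈ Finset.range n,
        (Real.cos (x + ((n + 1 + i : ℕ)) * (Real.pi / (2 * n + 1))) /
          Real.sin (x + ((n + 1 + i : ℕ)) * (Real.pi / (2 * n + 1)))) := by
    rw [← Finset.prod_inv_distrib]
    have step : ∀ i ∈ Finset.range n,
        (Real.cos (x + (2 * i + 1 : ℕ) * (Real.pi / (2 * (2 * n + 1)))) /
          Real.sin (x + (2 * i + 1 : ℕ) * (Real.pi / (2 * (2 * n + 1)))))⁻¹
        = (-1) * (Real.cos (x + ((n + 1 + i : ℕ)) * (Real.pi / (2 * n + 1))) /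
            Real.sin (x + ((n + 1 + i : ℕ)) * (Real.pi / (2 * n + 1)))) := by
      intro i _
      have harg : x + ((n + 1 + i : ℕ)) * (Real.pi / (2 * (n : ℝ) + 1))
          = (x + (2 * i + 1 : ℕ) * (Real.pi / (2 * (2 * (n : ℝ) + 1)))) + Real.pi / 2 := by
        push_cast
        field_simp
        ring
      rw [harg, Real.cos_add_pi_div_two, Real.sin_add_pi_div_two, inv_div]
      ring
    rw [Finset.prod_congr rfl step, Finset.prod_mul_distrib, Finset.prod_const,
      Finset.card_range]
  rw [he, ho]
  have hcomb : (∏ i ∈ Finset.range (n + 1),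
      (Real.cos (x + i * (Real.pi / (2 * n + 1))) /
        Real.sin (x + i * (Real.pi / (2 * n + 1))))) *
      (∏ i ∈ Finset.range n,
        (Real.cos (x + ((n + 1 + i : ℕ)) * (Real.pi / (2 * n + 1))) /
          Real.sin (x + ((n + 1 + i : ℕ)) * (Real.pi / (2 * n + 1)))))
      = ∏ i ∈ Finset.range (2 * n + 1),
        (Real.cos (x + i * (Real.pi / (2 * n + 1))) /
          Real.sin (x + i * (Real.pi / (2 * n + 1)))) := by
    rw [show 2 * n + 1 = (n + 1) + n by omega]
    exact (Finset.prod_range_add _ (n + 1) n).symm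
  rw [mul_left_comm, hcomb, cot_prod, ← mul_assoc, ← pow_add,
    Even.neg_one_pow ⟨n, rfl⟩, one_mul]



lemma mydiv_helper (a b c' d : ℝ) : (2 * a * c') / -(2 * b * d) = (-1) * ((a / b) * (c' / d)) := by
  rw [div_neg, div_mul_div_comm, show 2 * a * c' = 2 * (a * c') by ring,
    show 2 * b * d = 2 * (b * d) by ring, mul_div_mul_left _ _ (two_ne_zero : (2:ℝ) ≠ 0)]
  ring

lemma cot_shift (y : ℝ) (k : ℤ) :
    Real.cos (y + k * Real.pi) / Real.sin (y + k * Real.pi) = Real.cos y / Real.sin y := by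
  rw [Real.cos_add_int_mul_pi, Real.sin_add_int_mul_pi,
    mul_div_mul_left _ _ (show ((-1:ℝ)) ^ k ≠ 0 from zpow_ne_zero _ (by norm_num))]

theorem finite_product_cos_sin_ratio (n : ℕ) (hn : 0 < n) (m r : ℝ)
    (hden : ∀ j ≤ 2 * n,
      Real.cos ((m * (2 * n + 1) + 2 * Real.pi * j + r * (2 * n + 1)) / (2 * (2 * n + 1)))
        - Real.sin ((m - r) / 2) ≠ 0)
    (htan : Real.cos ((Real.pi + 2 * r + 4 * n * r) / 4) ≠ 0)
    (htan' : Real.tan ((Real.pi + 2 * r + 4 * n * r) / 4) ≠ 0)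
    (hsin : Real.sin (m * (2 * n + 1) / 2 - Real.pi / 4) ≠ 0) :
    ∏ j ∈ Finset.range (2 * n + 1),
      ((Real.cos ((m + 2 * Real.pi * j / (2 * n + 1) + r) / 2) + Real.sin ((m - r) / 2)) /
        (Real.cos ((m * (2 * n + 1) + 2 * Real.pi * j + r * (2 * n + 1)) / (2 * (2 * n + 1)))
          - Real.sin ((m - r) / 2))) ^ ((-1 : ℤ) ^ j)
    = (-(Real.sin ((m * (4 * n + 2) + Real.pi) / 4)) /
        (Real.tan ((Real.pi + 2 * r + 4 * n * r) / 4) *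
          Real.sin (m * (2 * n + 1) / 2 - Real.pi / 4))) ^ ((-1 : ℤ) ^ n) := by
  clear hden
  have h2n1 : (2 * (n : ℝ) + 1) ≠ 0 := by positivity
  have hterm : ∀ j ∈ Finset.range (2 * n + 1),
      ((Real.cos ((m + 2 * Real.pi * j / (2 * n + 1) + r) / 2) + Real.sin ((m - r) / 2)) /
        (Real.cos ((m * (2 * n + 1) + 2 * Real.pi * j + r * (2 * n + 1)) / (2 * (2 * n + 1)))
          - Real.sin ((m - r) / 2))) ^ ((-1 : ℤ) ^ j)
      = ((-1 : ℝ)) ^ ((-1 : ℤ) ^ j) *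
        ((Real.cos ((Real.pi / 4 + r / 2) + j * (Real.pi / (2 * (2 * n + 1)))) /
            Real.sin ((Real.pi / 4 + r / 2) + j * (Real.pi / (2 * (2 * n + 1))))) ^ ((-1 : ℤ) ^ j) *
          (Real.cos ((m / 2 - Real.pi / 4) + j * (Real.pi / (2 * (2 * n + 1)))) /
            Real.sin ((m / 2 - Real.pi / 4) + j * (Real.pi / (2 * (2 * n + 1))))) ^ ((-1 : ℤ) ^ j)) := by
    intro j _
    have harg : (m * (2 * (n:ℝ) + 1) + 2 * Real.pi * j + r * (2 * (n:ℝ) + 1)) / (2 * (2 * (n:ℝ) + 1))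
        = (m + 2 * Real.pi * j / (2 * (n:ℝ) + 1) + r) / 2 := by
      rw [div_eq_div_iff (by positivity) (by positivity : (2:ℝ) ≠ 0)]
      field_simp
    have hAB : (m + 2 * Real.pi * (j:ℝ) / (2 * (n:ℝ) + 1) + r) / 2
        = ((Real.pi / 4 + r / 2) + j * (Real.pi / (2 * (2 * (n:ℝ) + 1))))
          + ((m / 2 - Real.pi / 4) + j * (Real.pi / (2 * (2 * (n:ℝ) + 1)))) := by
      field_simp
      ring
    have hAB2 : Real.pi / 2 - (m - r) / 2
        = ((Real.pi / 4 + r / 2) + j * (Real.pi / (2 * (2 * (n:ℝ) + 1))))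
          - ((m / 2 - Real.pi / 4) + j * (Real.pi / (2 * (2 * (n:ℝ) + 1)))) := by ring
    have h1 : Real.cos ((m + 2 * Real.pi * (j:ℝ) / (2 * (n:ℝ) + 1) + r) / 2) + Real.sin ((m - r) / 2)
        = 2 * Real.cos ((Real.pi / 4 + r / 2) + j * (Real.pi / (2 * (2 * (n:ℝ) + 1))))
          * Real.cos ((m / 2 - Real.pi / 4) + j * (Real.pi / (2 * (2 * (n:ℝ) + 1)))) := by
      rw [← Real.cos_pi_div_two_sub ((m - r) / 2), hAB, hAB2, Real.cos_add, Real.cos_sub]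
      ring
    have h2 : Real.cos ((m + 2 * Real.pi * (j:ℝ) / (2 * (n:ℝ) + 1) + r) / 2) - Real.sin ((m - r) / 2)
        = -(2 * Real.sin ((Real.pi / 4 + r / 2) + j * (Real.pi / (2 * (2 * (n:ℝ) + 1))))
          * Real.sin ((m / 2 - Real.pi / 4) + j * (Real.pi / (2 * (2 * (n:ℝ) + 1))))) := by
      rw [← Real.cos_pi_div_two_sub ((m - r) / 2), hAB, hAB2, Real.cos_add, Real.cos_sub]
      ring
    rw [harg, h1, h2, mydiv_helper, mul_zpow, mul_zpow]
  rw [Finset.prod_congr rfl hterm, Finset.prod_mul_distrib, Finset.prod_mul_distrib]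
  have hsign : ∏ j ∈ Finset.range (2 * n + 1), ((-1 : ℝ)) ^ ((-1 : ℤ) ^ j) = -1 := by
    have hv : ∀ j ∈ Finset.range (2 * n + 1), ((-1 : ℝ)) ^ ((-1 : ℤ) ^ j) = -1 := by
      intro j _
      rcases Nat.even_or_odd j with h | h
      · rw [h.neg_one_pow, zpow_one]
      · rw [h.neg_one_pow]
        norm_num
    rw [Finset.prod_congr rfl hv, Finset.prod_const, Finset.card_range,
      Odd.neg_one_pow ⟨n, by ring⟩]
  rw [hsign, cotF n (Real.pi / 4 + r / 2), cotF n (m / 2 - Real.pi / 4)]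
  have hsA : Real.sin ((Real.pi + 2 * r + 4 * n * r) / 4) ≠ 0 := by
    intro h
    exact htan' (by rw [Real.tan_eq_sin_div_cos, h, zero_div])
  have hC : (m * (4 * (n:ℝ) + 2) + Real.pi) / 4
      = (m * (2 * (n:ℝ) + 1) / 2 - Real.pi / 4) + Real.pi / 2 := by ring
  rw [hC, Real.sin_add_pi_div_two]
  rcases Nat.even_or_odd n with ⟨p, hp⟩ | ⟨p, hp⟩
  · -- n = p + p
    subst hp
    push_cast at htan htan' hsin hsA ⊢
    have eA : (2 * ((p:ℝ) + (p:ℝ)) + 1) * (Real.pi / 4 + r / 2)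
        = (Real.pi + 2 * r + 4 * ((p:ℝ) + (p:ℝ)) * r) / 4 + (p : ℤ) * Real.pi := by
      push_cast; ring
    have eB : (2 * ((p:ℝ) + (p:ℝ)) + 1) * (m / 2 - Real.pi / 4)
        = (m * (2 * ((p:ℝ) + (p:ℝ)) + 1) / 2 - Real.pi / 4) + (((-(p : ℤ)) : ℤ) : ℝ) * Real.pi := by
      push_cast; ring
    rw [eA, eB, cot_shift, cot_shift, Even.neg_one_pow ⟨p, rfl⟩, zpow_one,
      Real.tan_eq_sin_div_cos]
    field_simp
  · -- n = 2 * p + 1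
    subst hp
    push_cast at htan htan' hsin hsA ⊢
    have eA : (2 * (2 * (p:ℝ) + 1) + 1) * (Real.pi / 4 + r / 2)
        = ((Real.pi + 2 * r + 4 * (2 * (p:ℝ) + 1) * r) / 4 + Real.pi / 2) + (p : ℤ) * Real.pi := by
      push_cast; ring
    have eB : (2 * (2 * (p:ℝ) + 1) + 1) * (m / 2 - Real.pi / 4)
        = ((m * (2 * (2 * (p:ℝ) + 1) + 1) / 2 - Real.pi / 4) - Real.pi / 2) + (((-(p : ℤ)) : ℤ) : ℝ) * Real.pi := by
      push_cast; ring
    rw [eA, eB, cot_shift, cot_shift, Odd.neg_one_pow ⟨p, by ring⟩, zpow_neg_one,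
      Real.cos_add_pi_div_two, Real.sin_add_pi_div_two,
      Real.cos_sub_pi_div_two, Real.sin_sub_pi_div_two,
      Real.tan_eq_sin_div_cos]
    by_cases hcB : Real.cos (m * (2 * (2 * (p:ℝ) + 1) + 1) / 2 - Real.pi / 4) = 0
    · simp [hcB]
    · field_simp
end

section
/- For every positive integer n and every real m with sec(πj/(2n+1))·sin(m) ≠ −1 and the quotient defined for all 0 ≤ j ≤ 2n, ∏_{j=0}^{2n} (1 − 2/(1 + sec(πj/(2n+1))·sin(m)))^{(−1)^j} = − ( sin(m/2 + mn − π/4) / sin(m/2 + mn + π/4) )^{2(−1)^n}. -/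
/-!
With `s = sin m` and `N = 2n + 1`, the `j`-th factor is `(s - c_j) / (s + c_j)` where
`c_j = (-1)^j cos (π j / N)`. Since `2 (n + 1) = N + 1`, `c_j = Re ζ^j` for the primitive
`N`-th root of unity `ζ = e^{2πi (n + 1) / N}`. Writing `s = cos y` and `z = e^{iy}`, the
factorisation `2 (cos y - Re w) = (z - w) (z - w⁻¹) / z` for `|w| = 1` together with
`∏ (z - ζ^j) = z^N - 1` gives `∏ 2 (s - c_j) = 2 (cos (N y) - 1)`, and `y ↦ y + π` gives
`∏ 2 (s + c_j) = 2 (cos (N y) + 1)`. Finally `cos (N y) = (-1)^n sin (N m)`, and the half-angle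
formulas turn `(cos (N y) - 1) / (cos (N y) + 1)` into the right-hand side.
-/

open Real Finset

namespace IsPrimitiveRoot

variable {K : Type*} [Field K] {ζ : K} {N : ℕ}

theorem prod_sub_pow (hζ : IsPrimitiveRoot ζ N) (hN : 0 < N) (z : K) :
    ∏ k ∈ range N, (z - ζ ^ k) = z ^ N - 1 := by
  simpa [Polynomial.eval_prod] using
    (congrArg (Polynomial.eval z) (X_pow_sub_C_eq_prod hζ hN (one_pow N))).symm

theorem prod_add_inv_sub_pow_add_inv (hζ : IsPrimitiveRoot ζ N) (hN : 0 < N) {z : K}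
    (hz : z ≠ 0) :
    ∏ k ∈ range N, (z + z⁻¹ - (ζ ^ k + (ζ ^ k)⁻¹)) = z ^ N + (z ^ N)⁻¹ - 2 := by
  have hζ0 : ζ ≠ 0 := hζ.ne_zero hN.ne'
  have factor : ∀ k ∈ range N,
      z + z⁻¹ - (ζ ^ k + (ζ ^ k)⁻¹) = (z - ζ ^ k) * (z - ζ⁻¹ ^ k) / z := by
    intro k _
    have : ζ ^ k ≠ 0 := pow_ne_zero k hζ0
    rw [inv_pow]
    field_simp
    ring
  rw [prod_congr rfl factor, prod_div_distrib, prod_mul_distrib, hζ.prod_sub_pow hN,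
    hζ.inv.prod_sub_pow hN, prod_const, card_range]
  have : z ^ N ≠ 0 := pow_ne_zero N hz
  field_simp
  ring

end IsPrimitiveRoot

theorem Complex.two_mul_cos_eq_exp_add_inv (x : ℂ) :
    2 * Complex.cos x = Complex.exp (x * Complex.I) + (Complex.exp (x * Complex.I))⁻¹ := by
  rw [Complex.two_cos, ← Complex.exp_neg, neg_mul]

theorem Real.prod_two_mul_cos_sub_cos {N a : ℕ} (hN : 0 < N) (ha : a.Coprime N) (y : ℝ) :
    ∏ k ∈ range N, 2 * (cos y - cos (2 * π * a * k / N)) = 2 * (cos (N * y) - 1) := by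
  have hζ := Complex.isPrimitiveRoot_exp_of_coprime a N hN.ne' ha
  set ζ := Complex.exp (2 * π * Complex.I * (a / N))
  set z := Complex.exp (y * Complex.I)
  have factor : ∀ k ∈ range N, 2 * (Complex.cos y - Complex.cos (2 * π * a * k / N)) =
      z + z⁻¹ - (ζ ^ k + (ζ ^ k)⁻¹) := by
    intro k _
    have hζk : ζ ^ k = Complex.exp ((2 * π * a * k / N) * Complex.I) := by
      rw [← Complex.exp_nat_mul]
      ring_nf
    rw [hζk, mul_sub, Complex.two_mul_cos_eq_exp_add_inv, Complex.two_mul_cos_eq_exp_add_inv]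
  apply Complex.ofReal_injective
  push_cast
  rw [prod_congr rfl factor, hζ.prod_add_inv_sub_pow_add_inv hN (Complex.exp_ne_zero _),
    ← Complex.exp_nat_mul, mul_sub, Complex.two_mul_cos_eq_exp_add_inv, mul_assoc, mul_one]

theorem Real.prod_two_mul_cos_add_cos {N a : ℕ} (hN : Odd N) (ha : a.Coprime N) (y : ℝ) :
    ∏ k ∈ range N, 2 * (cos y + cos (2 * π * a * k / N)) = 2 * (cos (N * y) + 1) := by
  have h := Real.prod_two_mul_cos_sub_cos hN.pos ha (y + π)
  rw [mul_add, cos_add_nat_mul_pi, hN.neg_one_pow, cos_add_pi] at h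
  simp only [← neg_add', mul_neg, prod_neg, card_range, hN.neg_one_pow] at h
  linarith

theorem Nat.coprime_add_one_two_mul_add_one (n : ℕ) : (n + 1).Coprime (2 * n + 1) := by
  rw [show 2 * n + 1 = (n + 1) + n by ring, Nat.coprime_self_add_right,
    Nat.coprime_self_add_left]
  exact Nat.coprime_one_left n

theorem Real.cos_two_pi_mul_add_one_mul_div_two_mul_add_one (n k : ℕ) :
    cos (2 * π * (n + 1) * k / (2 * n + 1)) = (-1) ^ k * cos (π * k / (2 * n + 1)) := by
  rw [show 2 * π * (n + 1) * k / (2 * n + 1) = π * k / (2 * n + 1) + k * π by field_simp; ring,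
    cos_add_nat_mul_pi]

theorem Real.prod_two_mul_cos_sub_neg_one_pow_mul_cos (n : ℕ) (y : ℝ) :
    ∏ j ∈ range (2 * n + 1), 2 * (cos y - (-1) ^ j * cos (π * j / (2 * n + 1))) =
      2 * (cos ((2 * n + 1) * y) - 1) := by
  simpa [cos_two_pi_mul_add_one_mul_div_two_mul_add_one] using
    prod_two_mul_cos_sub_cos (by omega) (Nat.coprime_add_one_two_mul_add_one n) y

theorem Real.prod_two_mul_cos_add_neg_one_pow_mul_cos (n : ℕ) (y : ℝ) :
    ∏ j ∈ range (2 * n + 1), 2 * (cos y + (-1) ^ j * cos (π * j / (2 * n + 1))) =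
      2 * (cos ((2 * n + 1) * y) + 1) := by
  simpa [cos_two_pi_mul_add_one_mul_div_two_mul_add_one] using
    prod_two_mul_cos_add_cos (odd_two_mul_add_one n) (Nat.coprime_add_one_two_mul_add_one n) y

theorem one_sub_two_div_one_add_inv_mul_zpow_neg_one_pow {K : Type*} [Field K] {c s : K}
    (hc : c ≠ 0) (hcs : 1 + c⁻¹ * s ≠ 0) (j : ℕ) :
    (1 - 2 / (1 + c⁻¹ * s)) ^ ((-1 : ℤ) ^ j) = (s - (-1) ^ j * c) / (s + (-1) ^ j * c) := by
  have hcs' : 1 + c⁻¹ * s = (c + s) / c := by field_simp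
  have hbase : 1 - 2 / (1 + c⁻¹ * s) = (s - c) / (s + c) := by
    have : c + s ≠ 0 := fun h => hcs (by rw [hcs', h, zero_div])
    rw [hcs', div_div_eq_mul_div, one_sub_div this, add_comm s c]
    ring
  rcases j.even_or_odd with hj | hj
  · rw [hj.neg_one_pow, hj.neg_one_pow, zpow_one, hbase, one_mul]
  · rw [hj.neg_one_pow, hj.neg_one_pow, zpow_neg_one, hbase, inv_div]
    ring

theorem Real.cos_two_mul_add_one_mul_sub_pi_div_two (n : ℕ) (x : ℝ) :
    cos ((2 * n + 1) * (x - π / 2)) = (-1) ^ n * sin ((2 * n + 1) * x) := by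
  rw [← cos_neg, show -((2 * n + 1) * (x - π / 2)) = n * π - ((2 * n + 1) * x - π / 2) by ring,
    cos_nat_mul_pi_sub, cos_sub_pi_div_two]

theorem Real.sq_sin_sub_pi_div_four_div_sin_add_pi_div_four (a : ℝ) :
    (sin (a - π / 4) / sin (a + π / 4)) ^ 2 = (1 - sin (2 * a)) / (1 + sin (2 * a)) := by
  rw [div_pow, sin_sq_eq_half_sub, sin_sq_eq_half_sub, mul_sub, mul_add,
    show 2 * (π / 4) = π / 2 by ring, cos_sub_pi_div_two, cos_add_pi_div_two,
    ← div_div_div_cancel_right₀ two_ne_zero (1 - sin (2 * a))]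
  ring

theorem neg_one_pow_mul_sub_one_div_add_one {K : Type*} [Field K] (n : ℕ) (S : K) :
    ((-1) ^ n * S - 1) / ((-1) ^ n * S + 1) = -((1 - S) / (1 + S)) ^ ((-1 : ℤ) ^ n) := by
  rcases n.even_or_odd with hn | hn
  · rw [hn.neg_one_pow, hn.neg_one_pow, zpow_one]
    ring
  · rw [hn.neg_one_pow, hn.neg_one_pow, zpow_neg_one, inv_div]
    ring

theorem finite_trigonometric_euler_form_general (n : ℕ) (m : ℝ)
    (hcos : ∀ j ≤ 2 * n, Real.cos (Real.pi * j / (2 * n + 1)) ≠ 0)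
    (hden : ∀ j ≤ 2 * n,
      1 + (Real.cos (Real.pi * j / (2 * n + 1)))⁻¹ * Real.sin m ≠ 0) :
    ∏ j ∈ Finset.range (2 * n + 1),
      (1 - 2 / (1 + (Real.cos (Real.pi * j / (2 * n + 1)))⁻¹ * Real.sin m)) ^ ((-1 : ℤ) ^ j)
    = -((Real.sin (m / 2 + m * n - Real.pi / 4) /
          Real.sin (m / 2 + m * n + Real.pi / 4)) ^ (2 * (-1 : ℤ) ^ n)) := by
  calc _ = ∏ j ∈ range (2 * n + 1), (sin m - (-1) ^ j * cos (π * j / (2 * n + 1))) /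
        (sin m + (-1) ^ j * cos (π * j / (2 * n + 1))) :=
        prod_congr rfl fun j hj => one_sub_two_div_one_add_inv_mul_zpow_neg_one_pow
          (hcos j (Nat.le_of_lt_succ (mem_range.mp hj)))
          (hden j (Nat.le_of_lt_succ (mem_range.mp hj))) j
    _ = (∏ j ∈ range (2 * n + 1),
            2 * (cos (m - π / 2) - (-1) ^ j * cos (π * j / (2 * n + 1)))) /
          ∏ j ∈ range (2 * n + 1),
            2 * (cos (m - π / 2) + (-1) ^ j * cos (π * j / (2 * n + 1))) := by
      simp only [← prod_div_distrib, mul_div_mul_left _ _ (two_ne_zero' ℝ), cos_sub_pi_div_two]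
    _ = (cos ((2 * n + 1) * (m - π / 2)) - 1) / (cos ((2 * n + 1) * (m - π / 2)) + 1) := by
      rw [prod_two_mul_cos_sub_neg_one_pow_mul_cos, prod_two_mul_cos_add_neg_one_pow_mul_cos,
        mul_div_mul_left _ _ (two_ne_zero' ℝ)]
    _ = _ := by
      rw [cos_two_mul_add_one_mul_sub_pi_div_two,
        show (2 * n + 1) * m = 2 * (m / 2 + m * n) by ring,
        neg_one_pow_mul_sub_one_div_add_one, zpow_mul, zpow_ofNat,
        sq_sin_sub_pi_div_four_div_sin_add_pi_div_four]

theorem finite_trigonometric_euler_form (n : ℕ) (hn : 0 < n) (m : ℝ)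
    (hcos : ∀ j ≤ 2 * n, Real.cos (Real.pi * j / (2 * n + 1)) ≠ 0)
    (hden : ∀ j ≤ 2 * n,
      1 + (Real.cos (Real.pi * j / (2 * n + 1)))⁻¹ * Real.sin m ≠ 0)
    (hsin : Real.sin (m / 2 + m * n + Real.pi / 4) ≠ 0) :
    ∏ j ∈ Finset.range (2 * n + 1),
      (1 - 2 / (1 + (Real.cos (Real.pi * j / (2 * n + 1)))⁻¹ * Real.sin m)) ^ ((-1 : ℤ) ^ j)
    = -((Real.sin (m / 2 + m * n - Real.pi / 4) /
          Real.sin (m / 2 + m * n + Real.pi / 4)) ^ (2 * (-1 : ℤ) ^ n)) :=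
  finite_trigonometric_euler_form_general n m hcos hden
end

section
/- For every positive integer n and complex m in the upper half-plane (Im(m) > 0) and every complex k, ∑_{j=0}^{2n} (−1)^j e^{iπj/(2n+1)} Φ(−e^{2i(πj/(2n+1)+m)}, k, n+1) = −(−1)^n (2n+1)^{1−k} e^{−2im(n+1)} Li_k(−e^{2im(2n+1)}), where Li_k is the polylogarithm. -/
open Complex Finset

lemma summable_lerch (z k : ℂ) (hz0 : z ≠ 0) (hz : ‖z‖ < 1) (a : ℕ) :
    Summable (fun l : ℕ => z ^ l / ((l : ℂ) + ((a : ℂ) + 1)) ^ k) := by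
  set K : ℕ := ⌈-k.re⌉₊ with hK
  have hKle : -k.re ≤ (K : ℝ) := Nat.le_ceil _
  have hzn : ‖z‖ ≠ 0 := norm_ne_zero_iff.mpr hz0
  have hzn' : ‖z‖ ≠ 0 := hzn
  have h1 : Summable (fun l : ℕ => ((l : ℝ)) ^ K * ‖z‖ ^ l) :=
    summable_pow_mul_geometric_of_norm_lt_one K (by simpa using hz)
  have h2 : Summable (fun l : ℕ => ((l : ℝ) + 1) ^ K * ‖z‖ ^ l) := by
    have h3 := (h1.comp_injective Nat.succ_injective).mul_left (‖z‖⁻¹)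
    refine h3.congr fun l => ?_
    simp only [Function.comp, Nat.succ_eq_add_one, pow_succ]
    push_cast
    field_simp
  refine Summable.of_norm_bounded (h2.mul_left (((a : ℝ) + 1) ^ K)) fun l => ?_
  have hpos : (0:ℝ) < (l : ℝ) + (a + 1) := by positivity
  have hcast : ((l : ℂ) + ((a:ℂ) + 1)) = (((l : ℝ) + (a + 1) : ℝ) : ℂ) := by push_cast; ring
  have hnorm : ‖((l : ℂ) + ((a:ℂ) + 1)) ^ k‖ = ((l:ℝ) + (a+1)) ^ k.re := by
    rw [hcast]
    exact Complex.norm_cpow_eq_rpow_re_of_pos hpos k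
  rw [norm_div, norm_pow, hnorm]
  have hb2 : (1:ℝ) / ((l:ℝ)+(a+1)) ^ k.re ≤ ((l:ℝ)+(a+1)) ^ (K:ℝ) := by
    rw [div_le_iff₀ (by positivity), ← Real.rpow_add hpos]
    exact Real.one_le_rpow (by linarith) (by linarith)
  have hb3 : ((l:ℝ)+(a+1)) ^ (K:ℝ) ≤ ((a:ℝ)+1)^K * ((l:ℝ)+1)^K := by
    rw [Real.rpow_natCast, ← mul_pow]
    apply pow_le_pow_left₀ hpos.le
    nlinarith [Nat.cast_nonneg (α := ℝ) l, Nat.cast_nonneg (α := ℝ) a]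
  calc ‖z‖ ^ l / ((l:ℝ)+(a+1)) ^ k.re
      = ‖z‖ ^ l * (1 / ((l:ℝ)+(a+1)) ^ k.re) := by ring
    _ ≤ ‖z‖ ^ l * (((a:ℝ)+1)^K * ((l:ℝ)+1)^K) := by
        apply mul_le_mul_of_nonneg_left (le_trans hb2 hb3) (by positivity)
    _ = ((a:ℝ)+1)^K * (((l:ℝ)+1)^K * ‖z‖^l) := by ring

lemma sum_root_pow (N : ℕ) (hN : 0 < N) (t : ℕ) :
    ∑ j ∈ Finset.range N, Complex.exp (2 * Real.pi * I * t / N) ^ j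
      = if N ∣ t then (N : ℂ) else 0 := by
  have hNne : (N : ℂ) ≠ 0 := Nat.cast_ne_zero.mpr hN.ne'
  have hc : (2 * Real.pi * I : ℂ) ≠ 0 :=
    mul_ne_zero (mul_ne_zero two_ne_zero (by exact_mod_cast Real.pi_ne_zero)) Complex.I_ne_zero
  by_cases hdvd : N ∣ t
  · obtain ⟨s, rfl⟩ := hdvd
    have h1 : Complex.exp (2 * Real.pi * I * (N * s) / N) = 1 := by
      have he : (2 : ℂ) * Real.pi * I * ((N : ℂ) * s) / N = (s : ℤ) * (2 * Real.pi * I) := by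
        push_cast; field_simp
      rw [he, Complex.exp_int_mul_two_pi_mul_I]
    simp [h1, dvd_mul_right]
  · have hne1 : Complex.exp (2 * Real.pi * I * t / N) ≠ 1 := by
      intro h
      rw [Complex.exp_eq_one_iff] at h
      obtain ⟨z, hz⟩ := h
      rw [div_eq_iff hNne] at hz
      have h2 : (t : ℂ) = (z : ℂ) * N := mul_left_cancel₀ hc (by linear_combination hz)
      have h3 : (t : ℤ) = z * N := by exact_mod_cast h2
      exact hdvd (Int.natCast_dvd_natCast.mp ⟨z, by rw [h3, mul_comm]⟩)
    rw [geom_sum_eq hne1, ← Complex.exp_nat_mul]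
    have he : (N : ℂ) * (2 * Real.pi * I * t / N) = (t : ℤ) * (2 * Real.pi * I) := by
      push_cast; field_simp
    rw [he, Complex.exp_int_mul_two_pi_mul_I]
    simp [hdvd]

/-- The Hurwitz-Lerch zeta function, defined by its series. -/
noncomputable def lerchPhi (z s a : ℂ) : ℂ := ∑' j : ℕ, z ^ j / ((j : ℂ) + a) ^ s

/-- The polylogarithm, defined by its series. -/
noncomputable def polylog (s z : ℂ) : ℂ := ∑' j : ℕ, z ^ (j + 1) / ((j : ℂ) + 1) ^ s

theorem lerch_polylog_identity (n : ℕ) (hn : 0 < n) (m k : ℂ) (hm : 0 < m.im) :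
    ∑ j ∈ Finset.range (2 * n + 1),
      (-1 : ℂ) ^ j * Complex.exp (Real.pi * I * j / (2 * n + 1)) *
        lerchPhi (-Complex.exp (2 * I * (Real.pi * j / (2 * n + 1) + m))) k ((n : ℂ) + 1)
    = -((-1 : ℂ) ^ n) * ((2 * n + 1 : ℂ)) ^ (1 - k) * Complex.exp (-2 * I * m * (n + 1)) *
        polylog k (-Complex.exp (2 * I * m * (2 * n + 1))) := by
  have hNpos : 0 < 2 * n + 1 := by omega
  have hNC : ((2 * n + 1 : ℕ) : ℂ) = 2 * (n : ℂ) + 1 := by push_cast; ring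
  have h2n1 : (2 * (n : ℂ) + 1) ≠ 0 := by
    rw [← hNC]; exact Nat.cast_ne_zero.mpr hNpos.ne'
  -- the lerch arguments and their norms
  set z : ℕ → ℂ := fun j => -Complex.exp (2 * I * (Real.pi * j / (2 * (n:ℂ) + 1) + m)) with hzdef
  have hzne : ∀ j, z j ≠ 0 := fun j => neg_ne_zero.mpr (Complex.exp_ne_zero _)
  have hzlt : ∀ j : ℕ, ‖z j‖ < 1 := by
    intro j
    have hc : (Real.pi : ℂ) * (j:ℂ) / (2*(n:ℂ)+1) = ((Real.pi * j / (2*n+1) : ℝ) : ℂ) := by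
      push_cast; ring
    have him : (Real.pi * (j:ℂ) / (2*(n:ℂ)+1)).im = 0 := by
      rw [hc]; exact Complex.ofReal_im _
    have hre : (2 * I * (Real.pi * (j:ℂ) / (2*(n:ℂ)+1) + m)).re = -2 * m.im := by
      simp [Complex.mul_re, Complex.mul_im, him]
    rw [hzdef]
    simp only [norm_neg, Complex.norm_exp, hre]
    exact Real.exp_lt_one_iff.mpr (by linarith)
  have hsum : ∀ j : ℕ, Summable (fun l : ℕ => z j ^ l / ((l : ℂ) + ((n:ℂ) + 1)) ^ k) :=
    fun j => summable_lerch (z j) k (hzne j) (hzlt j) n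
  -- Step 1 : write LHS as a single tsum
  have step1 : ∑ j ∈ Finset.range (2 * n + 1),
      (-1 : ℂ) ^ j * Complex.exp (Real.pi * I * j / (2 * (n:ℂ) + 1)) *
        lerchPhi (z j) k ((n : ℂ) + 1)
      = ∑' l : ℕ, ∑ j ∈ Finset.range (2 * n + 1),
          (-1 : ℂ) ^ j * Complex.exp (Real.pi * I * j / (2 * (n:ℂ) + 1)) *
            (z j ^ l / ((l : ℂ) + ((n:ℂ) + 1)) ^ k) := by
    rw [Summable.tsum_finsetSum (fun j _ => (hsum j).mul_left _)]
    exact Finset.sum_congr rfl fun j _ => (tsum_mul_left).symm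
  rw [step1]
  -- Step 2 : evaluate the inner finite sum
  have step2 : ∀ l : ℕ, ∑ j ∈ Finset.range (2 * n + 1),
      (-1 : ℂ) ^ j * Complex.exp (Real.pi * I * j / (2 * (n:ℂ) + 1)) *
        (z j ^ l / ((l : ℂ) + ((n:ℂ) + 1)) ^ k)
      = ((-1:ℂ) ^ l * Complex.exp (2 * I * m * l) *
          (if (2*n+1) ∣ (l + n + 1) then ((2*n+1 : ℕ) : ℂ) else 0)) /
          ((l : ℂ) + ((n:ℂ) + 1)) ^ k := by
    intro l
    have key : ∀ j : ℕ, (-1 : ℂ) ^ j * Complex.exp (Real.pi * I * j / (2 * (n:ℂ) + 1)) * z j ^ l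
        = (-1:ℂ) ^ l * Complex.exp (2 * I * m * l) *
          Complex.exp (2 * Real.pi * I * ((l + n + 1 : ℕ) : ℂ) / ((2*n+1 : ℕ) : ℂ)) ^ j := by
      intro j
      rw [hzdef]
      simp only [neg_pow (Complex.exp _) l]
      rw [show ((-1 : ℂ)) = Complex.exp (Real.pi * I) from Complex.exp_pi_mul_I.symm]
      simp only [← Complex.exp_nat_mul, ← Complex.exp_add]
      congr 1
      rw [hNC]
      push_cast
      field_simp
      ring
    calc ∑ j ∈ Finset.range (2 * n + 1),
        (-1 : ℂ) ^ j * Complex.exp (Real.pi * I * j / (2 * (n:ℂ) + 1)) *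
          (z j ^ l / ((l : ℂ) + ((n:ℂ) + 1)) ^ k)
        = (∑ j ∈ Finset.range (2 * n + 1),
            (-1 : ℂ) ^ j * Complex.exp (Real.pi * I * j / (2 * (n:ℂ) + 1)) * z j ^ l) /
            ((l : ℂ) + ((n:ℂ) + 1)) ^ k := by
          rw [Finset.sum_div]; exact Finset.sum_congr rfl fun j _ => by ring
      _ = ((-1:ℂ) ^ l * Complex.exp (2 * I * m * l) *
            ∑ j ∈ Finset.range (2 * n + 1),
              Complex.exp (2 * Real.pi * I * ((l + n + 1 : ℕ) : ℂ) / ((2*n+1 : ℕ) : ℂ)) ^ j) /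
            ((l : ℂ) + ((n:ℂ) + 1)) ^ k := by
          rw [Finset.sum_congr rfl fun j _ => key j, ← Finset.mul_sum]
      _ = _ := by rw [sum_root_pow (2*n+1) hNpos (l+n+1)]
  rw [tsum_congr step2]
  -- Step 3 : reindex the tsum
  have hinj : Function.Injective (fun q : ℕ => (2*n+1) * q + n) := by
    intro a b h
    simp only at h
    have := Nat.add_right_cancel h
    exact Nat.eq_of_mul_eq_mul_left hNpos this
  have hsupp : Function.support (fun l : ℕ =>
      ((-1:ℂ) ^ l * Complex.exp (2 * I * m * l) *
        (if (2*n+1) ∣ (l + n + 1) then ((2*n+1 : ℕ) : ℂ) else 0)) /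
        ((l : ℂ) + ((n:ℂ) + 1)) ^ k) ⊆ Set.range (fun q : ℕ => (2*n+1) * q + n) := by
    intro l hl
    by_contra hnot
    apply hl
    have hndvd : ¬ (2*n+1) ∣ (l + n + 1) := by
      intro hdvd
      obtain ⟨t, ht⟩ := hdvd
      match t with
      | 0 => omega
      | q+1 =>
        apply hnot
        refine ⟨q, ?_⟩
        have h1 : l + n + 1 = (2*n+1) * q + (2*n+1) := by rw [ht, Nat.mul_succ]
        simp only
        linarith
    simp only [if_neg hndvd, mul_zero, zero_div]
  rw [← hinj.tsum_eq hsupp]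
  -- Step 4 : identify with the RHS
  rw [show polylog k (-Complex.exp (2 * I * m * (2 * (n:ℂ) + 1)))
      = ∑' q : ℕ, (-Complex.exp (2 * I * m * (2 * (n:ℂ) + 1))) ^ (q+1) / ((q:ℂ)+1) ^ k from rfl,
    ← tsum_mul_left]
  refine tsum_congr fun q => ?_
  beta_reduce
  have hdvd : (2*n+1) ∣ ((2*n+1) * q + n + n + 1) := ⟨q + 1, by ring⟩
  rw [if_pos hdvd]
  -- simplify casts
  have hc1 : (((2*n+1) * q + n : ℕ) : ℂ) = (2*(n:ℂ)+1) * q + n := by push_cast; ring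
  have hc2 : (((2*n+1) * q + n : ℕ) : ℂ) + ((n:ℂ)+1) = (((2*n+1 : ℕ) : ℝ) : ℂ) * (((q:ℝ)+1 : ℝ) : ℂ) := by
    push_cast; ring
  rw [hc2, Complex.mul_cpow_ofReal_nonneg (by positivity) (by positivity)]
  have hsign : (-1 : ℂ) ^ ((2*n+1) * q + n) = (-1:ℂ)^q * (-1:ℂ)^n := by
    rw [pow_add, pow_mul, Odd.neg_one_pow ⟨n, by ring⟩]
  have hq1 : ((q:ℂ) + 1) ≠ 0 := Nat.cast_add_one_ne_zero q
  have hP : (2*(n:ℂ)+1) ^ k ≠ 0 := by simp [Complex.cpow_eq_zero_iff, h2n1]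
  have hQ : ((q:ℂ)+1) ^ k ≠ 0 := by simp [Complex.cpow_eq_zero_iff, hq1]
  have hE : Complex.exp (-2 * I * m * ((n:ℂ)+1)) *
      Complex.exp (((q:ℂ)+1) * (2 * I * m * (2*(n:ℂ)+1)))
      = Complex.exp (2 * I * m * ((2*(n:ℂ)+1) * q + n)) := by
    rw [← Complex.exp_add]; congr 1; ring
  rw [hsign, hc1, neg_pow (Complex.exp (2 * I * m * (2*(n:ℂ)+1))) (q+1), ← Complex.exp_nat_mul, Complex.cpow_sub _ _ h2n1, Complex.cpow_one]
  push_cast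
  rw [← hE, pow_succ]
  field_simp
end

section
/- For every positive integer n, ∑_{j=0}^{2n} (−1)^j e^{−iπj/(2n+1)} · log(1 + e^{2iπj/(2n+1)}) = −(1/2)·(−1)^n·(ψ((n+1)/(4n+2)) − ψ((3n+2)/(4n+2))), where ψ is the digamma function and log denotes the principal branch of the complex logarithm. -/
open Complex Finset

/-- The digamma function `Γ'/Γ`. -/
noncomputable def digamma (a : ℂ) : ℂ := deriv Complex.Gamma a / Complex.Gamma a

section Aux
open Filter Topology Set







noncomputable def psiR (x : ℝ) : ℝ := deriv (Real.log ∘ Real.Gamma) x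

lemma diffAux {x : ℝ} (hx : 0 < x) : ∀ m : ℕ, x ≠ -(m : ℝ) := fun m =>
  ((neg_nonpos.mpr (Nat.cast_nonneg m)).trans_lt hx).ne'

lemma differentiableAt_logGamma {x : ℝ} (hx : 0 < x) :
    DifferentiableAt ℝ (Real.log ∘ Real.Gamma) x := by
  simpa [Function.comp_def] using
    (Real.differentiableAt_Gamma (diffAux hx)).log (Real.Gamma_pos_of_pos hx).ne'

lemma psiR_eq {x : ℝ} (hx : 0 < x) :
    psiR x = deriv Real.Gamma x / Real.Gamma x := by
  rw [psiR, Function.comp_def,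
    deriv.log (Real.differentiableAt_Gamma (diffAux hx)) (Real.Gamma_pos_of_pos hx).ne']

lemma psiR_rec {x : ℝ} (hx : 0 < x) : psiR (x + 1) = psiR x + 1 / x := by
  have h_rec : ∀ y : ℝ, 0 < y → (Real.log ∘ Real.Gamma) (y + 1)
      = (Real.log ∘ Real.Gamma) y + Real.log y := fun y hy => by
    simp only [Function.comp_apply, Real.Gamma_add_one hy.ne',
      Real.log_mul hy.ne' (Real.Gamma_pos_of_pos hy).ne', add_comm]
  rw [psiR, psiR, ← deriv_comp_add_const, one_div, ← Real.deriv_log,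
    ← deriv_add (differentiableAt_logGamma hx) (Real.differentiableAt_log hx.ne')]
  apply Filter.EventuallyEq.deriv_eq
  filter_upwards [eventually_gt_nhds hx] using h_rec

lemma psiR_mono : MonotoneOn psiR (Ioi 0) :=
  Real.convexOn_log_Gamma.monotoneOn_deriv fun _ hx => differentiableAt_logGamma hx

lemma psiR_tail {c : ℝ} (hc : 0 < c) :
    Tendsto (fun M : ℕ => psiR (c + M + 1 / 2) - psiR (c + M)) atTop (𝓝 0) := by
  have hb : ∀ M : ℕ, psiR (c + M + 1 / 2) - psiR (c + M) ≤ 1 / (c + M) := by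
    intro M
    have h1 : psiR (c + M + 1 / 2) ≤ psiR (c + M + 1) := by
      apply psiR_mono (by simp [Set.mem_Ioi]; positivity) (by simp [Set.mem_Ioi]; positivity)
      linarith
    have h2 : psiR (c + M + 1) = psiR (c + M) + 1 / (c + M) := psiR_rec (by positivity)
    linarith
  have h0 : ∀ M : ℕ, 0 ≤ psiR (c + M + 1 / 2) - psiR (c + M) := by
    intro M
    have := psiR_mono (a := c + M) (b := c + M + 1/2)
      (by simp only [Set.mem_Ioi]; positivity) (by simp only [Set.mem_Ioi]; positivity)
      (by linarith)
    linarith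
  have hlim : Tendsto (fun M : ℕ => 1 / (c + M)) atTop (𝓝 0) := by
    apply Tendsto.comp (tendsto_inv_atTop_zero.congr fun x => (one_div x).symm)
    exact tendsto_atTop_add_const_left _ _ tendsto_natCast_atTop_atTop
  exact tendsto_of_tendsto_of_tendsto_of_le_of_le tendsto_const_nhds hlim h0 hb

lemma even_partial {a : ℝ} (ha : 0 < a) (K : ℕ) :
    ∑ m ∈ range (2 * K), (-1 : ℝ) ^ m / (a + m)
      = (psiR (a / 2 + K) - psiR (a / 2) - (psiR ((a + 1) / 2 + K) - psiR ((a + 1) / 2))) / 2 := by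
  induction K with
  | zero => simp
  | succ K ih =>
    have e1 : psiR (a / 2 + (K + 1 : ℕ)) = psiR (a / 2 + K) + 1 / (a / 2 + K) := by
      have := psiR_rec (x := a / 2 + K) (by positivity)
      push_cast
      rw [show a / 2 + ((K : ℝ) + 1) = a / 2 + K + 1 by ring, this]
    have e2 : psiR ((a + 1) / 2 + (K + 1 : ℕ))
        = psiR ((a + 1) / 2 + K) + 1 / ((a + 1) / 2 + K) := by
      have := psiR_rec (x := (a + 1) / 2 + K) (by positivity)
      push_cast
      rw [show (a + 1) / 2 + ((K : ℝ) + 1) = (a + 1) / 2 + K + 1 by ring, this]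
    rw [show 2 * (K + 1) = 2 * K + 1 + 1 by ring, Finset.sum_range_succ, Finset.sum_range_succ,
      ih, e1, e2]
    have h1 : a + (2 * K : ℝ) ≠ 0 := by positivity
    have h2 : a + ((2 * K : ℕ) + 1 : ℝ) ≠ 0 := by positivity
    have h3 : a / 2 + (K : ℝ) ≠ 0 := by positivity
    have h4 : (a + 1) / 2 + (K : ℝ) ≠ 0 := by positivity
    push_cast
    rw [pow_succ, pow_mul]
    norm_num
    field_simp
    ring

lemma half_tendsto : Tendsto (fun M : ℕ => M / 2) atTop atTop := by
  apply Filter.tendsto_atTop_atTop.mpr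
  intro b
  exact ⟨2 * b, fun m hm => Nat.le_div_iff_mul_le two_pos |>.mpr (by omega)⟩

lemma S_tendsto {a : ℝ} (ha : 0 < a) :
    Tendsto (fun K : ℕ => ∑ m ∈ range K, (-1 : ℝ) ^ m / (a + m)) atTop
      (𝓝 ((psiR ((a + 1) / 2) - psiR (a / 2)) / 2)) := by
  set L := (psiR ((a + 1) / 2) - psiR (a / 2)) / 2 with hL
  set S := fun K : ℕ => ∑ m ∈ range K, (-1 : ℝ) ^ m / (a + m) with hS
  have heven : Tendsto (fun K : ℕ => S (2 * K)) atTop (𝓝 L) := by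
    have hrw : ∀ K : ℕ, S (2 * K)
        = L + (-(psiR (a / 2 + K + 1 / 2) - psiR (a / 2 + K)) - psiR (a / 2) + psiR ((a + 1) / 2)
            - (psiR ((a + 1) / 2) - psiR (a / 2))) / 2 := by
      intro K
      simp only [hS]
      rw [even_partial ha K, hL]
      have : (a + 1) / 2 + (K : ℝ) = a / 2 + K + 1 / 2 := by ring
      rw [this]
      ring
    simp only [hrw]
    have := ((psiR_tail (c := a / 2) (by positivity)).neg.sub_const (psiR (a / 2))|>.add_const
      (psiR ((a + 1) / 2)) |>.sub_const (psiR ((a + 1) / 2) - psiR (a / 2))).div_const 2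
    have h2 : Tendsto (fun K : ℕ =>
        (-(psiR (a / 2 + K + 1 / 2) - psiR (a / 2 + K)) - psiR (a / 2) + psiR ((a + 1) / 2)
          - (psiR ((a + 1) / 2) - psiR (a / 2))) / 2) atTop (𝓝 0) := by
      convert this using 2
      ring
    simpa using (tendsto_const_nhds (x := L)).add h2
  have hdiff : Tendsto (fun M : ℕ => S M - S (2 * (M / 2))) atTop (𝓝 0) := by
    have hb : ∀ M : ℕ, |S M - S (2 * (M / 2))| ≤ 1 / (a + (2 * (M / 2) : ℕ)) := by
      intro M
      rcases Nat.even_or_odd M with ⟨q, hq⟩ | ⟨q, hq⟩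
      · have : 2 * (M / 2) = M := by omega
        rw [this]
        simp only [sub_self, abs_zero]
        positivity
      · have h2 : 2 * (M / 2) = M - 1 := by omega
        have hM : M = 2 * (M / 2) + 1 := by omega
        simp only [hS]
        nth_rewrite 1 [hM]
        rw [Finset.sum_range_succ, add_sub_cancel_left, pow_mul]
        simp only [neg_one_sq, one_pow, one_div]
        rw [_root_.abs_of_nonneg (by positivity)]
    have htwo : Tendsto (fun M : ℕ => 2 * (M / 2)) atTop atTop := by
      apply Filter.tendsto_atTop_atTop.mpr
      intro b
      exact ⟨b + 1, fun m hm => by omega⟩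
    have hg : Tendsto (fun K : ℕ => 1 / (a + K)) atTop (𝓝 0) := by
      apply Tendsto.comp (tendsto_inv_atTop_zero.congr fun x => (one_div x).symm)
      exact tendsto_atTop_add_const_left _ _ tendsto_natCast_atTop_atTop
    exact squeeze_zero_norm (fun M => by simpa [Real.norm_eq_abs] using hb M) (hg.comp htwo)
  have := (heven.comp half_tendsto).add hdiff
  simp only [Function.comp_def, add_zero] at this
  refine this.congr fun M => by ring



lemma digamma_ofReal {x : ℝ} (hx : 0 < x) : _root_.digamma (x : ℂ) = (psiR x : ℂ) := by
  have hne : ∀ m : ℕ, (x : ℂ) ≠ -(m : ℂ) := by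
    intro m h
    exact diffAux hx m (by exact_mod_cast h)
  have hd : HasDerivAt Complex.Gamma (deriv Complex.Gamma x) x :=
    (Complex.differentiableAt_Gamma _ hne).hasDerivAt
  have hcomp : HasDerivAt (fun t : ℝ => Complex.Gamma t) (deriv Complex.Gamma x) x :=
    hd.comp_ofReal
  have hreal : HasDerivAt Real.Gamma (deriv Real.Gamma x) x :=
    (Real.differentiableAt_Gamma (diffAux hx)).hasDerivAt
  have hof : HasDerivAt (fun t : ℝ => ((Real.Gamma t : ℝ) : ℂ)) ((deriv Real.Gamma x : ℝ) : ℂ) x :=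
    hreal.ofReal_comp
  have hfun : (fun t : ℝ => Complex.Gamma t) = fun t : ℝ => ((Real.Gamma t : ℝ) : ℂ) := by
    funext t; exact Complex.Gamma_ofReal t
  rw [hfun] at hcomp
  have hder : deriv Complex.Gamma (x : ℂ) = ((deriv Real.Gamma x : ℝ) : ℂ) :=
    hcomp.unique hof
  rw [_root_.digamma, hder, Complex.Gamma_ofReal, psiR_eq hx]
  push_cast
  ring


lemma log_series_boundary {z : ℂ} (hz : ‖z‖ = 1) (hz1 : z ≠ -1) :
    Tendsto (fun M : ℕ => ∑ m ∈ range M, (-1 : ℂ) ^ m * z ^ (m + 1) / ((m : ℂ) + 1)) atTop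
      (𝓝 (Complex.log (1 + z))) := by
  have h1z : (1 : ℂ) + z ≠ 0 := by
    intro h
    exact hz1 (by linear_combination h)
  set g : ℕ → ℂ := fun m => (-1 : ℂ) ^ m * z ^ (m + 1) / ((m : ℂ) + 1) with hg
  -- Dirichlet's test gives convergence of partial sums
  have hfa : Antitone (fun m : ℕ => 1 / ((m : ℝ) + 1)) := by
    intro m m' h
    have : (m : ℝ) + 1 ≤ (m' : ℝ) + 1 := by exact_mod_cast by omega
    exact one_div_le_one_div_of_le (by positivity) this
  have hf0 : Tendsto (fun m : ℕ => 1 / ((m : ℝ) + 1)) atTop (𝓝 0) :=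
    tendsto_one_div_add_atTop_nhds_zero_nat
  have hzb : ∀ M : ℕ, ‖∑ i ∈ range M, (-1 : ℂ) ^ i * z ^ (i + 1)‖ ≤ 2 / ‖1 + z‖ := by
    intro M
    have hne : -z ≠ 1 := fun h => hz1 (by linear_combination -h)
    have : ∑ i ∈ range M, (-1 : ℂ) ^ i * z ^ (i + 1) = z * (((-z) ^ M - 1) / (-z - 1)) := by
      rw [← geom_sum_eq hne, Finset.mul_sum]
      exact Finset.sum_congr rfl fun i _ => by ring
    rw [this, norm_mul, hz, one_mul, norm_div]
    have h1 : ‖(-z) ^ M - 1‖ ≤ 2 := by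
      calc ‖(-z) ^ M - 1‖ ≤ ‖(-z) ^ M‖ + ‖(1 : ℂ)‖ := norm_sub_le _ _
        _ = 2 := by rw [norm_pow, norm_neg, hz]; norm_num
    have h2 : ‖-z - 1‖ = ‖1 + z‖ := by
      rw [show -z - 1 = -(1 + z) by ring, norm_neg]
    rw [h2]
    gcongr
  have hc : CauchySeq fun M => ∑ i ∈ range M, (1 / ((i : ℝ) + 1)) • ((-1 : ℂ) ^ i * z ^ (i + 1)) :=
    hfa.cauchySeq_series_mul_of_tendsto_zero_of_bounded hf0 hzb
  have hsmul : ∀ i : ℕ, (1 / ((i : ℝ) + 1)) • ((-1 : ℂ) ^ i * z ^ (i + 1)) = g i := by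
    intro i
    rw [real_smul, hg]
    push_cast
    ring
  obtain ⟨L, hL⟩ := cauchySeq_tendsto_of_complete hc
  have hL' : Tendsto (fun M => ∑ i ∈ range M, g i) atTop (𝓝 L) := by
    refine hL.congr fun M => Finset.sum_congr rfl fun i _ => hsmul i
  -- Abel's limit theorem
  have hAbel := Complex.tendsto_tsum_powerSeries_nhdsWithin_lt hL'
  have hslit : 1 + z ∈ Complex.slitPlane := by
    rw [Complex.mem_slitPlane_iff]
    have hn : z.re * z.re + z.im * z.im = 1 := by
      have h1 := Complex.sq_norm z
      rw [Complex.normSq_apply] at h1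
      rw [hz] at h1
      nlinarith
    by_cases him : z.im = 0
    · left
      have h2 : (z.re - 1) * (z.re + 1) = 0 := by nlinarith
      rcases mul_eq_zero.mp h2 with h3 | h3
    
      · simp only [Complex.add_re, Complex.one_re]
        nlinarith
      · exfalso
        apply hz1
        apply Complex.ext <;> simp [him] <;> linarith
    · right
      simpa using him
  -- the power series equals log(1+xz)/x
  have hev : ∀ᶠ x : ℝ in 𝓝[<] 1, (∑' n, g n * (x : ℂ) ^ n) = Complex.log (1 + x * z) / x := by
    have h01 : ∀ᶠ x : ℝ in 𝓝[<] 1, 0 < x ∧ x < 1 := by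
      filter_upwards [self_mem_nhdsWithin,
        eventually_nhdsWithin_of_eventually_nhds (eventually_gt_nhds one_pos)] with x h1 h2
      exact ⟨h2, h1⟩
    filter_upwards [h01] with x hx
    obtain ⟨hx0, hx1⟩ := hx
    have hxz : ‖(x : ℂ) * z‖ < 1 := by
      rw [norm_mul, hz, mul_one, Complex.norm_real, Real.norm_eq_abs, _root_.abs_of_pos hx0]
      exact hx1
    have ht := Complex.hasSum_taylorSeries_log hxz
    have ht1 : HasSum (fun m : ℕ => (-1 : ℂ) ^ (m + 1 + 1) * ((x : ℂ) * z) ^ (m + 1) / (m + 1))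
        (Complex.log (1 + x * z)) := by
      have := (hasSum_nat_add_iff' (f := fun m : ℕ =>
        (-1 : ℂ) ^ (m + 1) * ((x : ℂ) * z) ^ m / m) 1).mpr ht
      simpa using this
    have ht2 : HasSum (fun m : ℕ => g m * (x : ℂ) ^ m)
        (Complex.log (1 + x * z) / x) := by
      have hxne : (x : ℂ) ≠ 0 := by exact_mod_cast hx0.ne'
      have h3 := ht1.div_const (x : ℂ)
      refine HasSum.congr_fun h3 fun m => ?_
      rw [hg]
      have hmp : ((x : ℂ) * z) ^ (m + 1) = (x : ℂ) ^ m * (x : ℂ) * z ^ (m + 1) := by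
        rw [mul_pow, pow_succ]
      have hm : ((m : ℂ) + 1) ≠ 0 := by
        have := Nat.cast_add_one_ne_zero (R := ℂ) m
        push_cast at this
        exact this
      rw [hmp]
      field_simp
      ring
    exact ht2.tsum_eq
  have hAbel2 : Tendsto (fun w => ∑' n, g n * w ^ n) (Filter.map ofReal (𝓝[<] 1))
      (𝓝 (Complex.log (1 + z))) := by
    rw [Filter.tendsto_map'_iff]
    have hcont : Tendsto (fun x : ℝ => Complex.log (1 + x * z)) (𝓝[<] 1)
        (𝓝 (Complex.log (1 + z))) := by
      have h1 : ContinuousAt (fun x : ℝ => Complex.log (1 + x * z)) 1 := by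
        apply ContinuousAt.clog
        · fun_prop
        · simpa using hslit
      simpa using (h1.tendsto.mono_left nhdsWithin_le_nhds)
    have hden : Tendsto (fun x : ℝ => (x : ℂ)) (𝓝[<] 1) (𝓝 1) := by
      exact (Complex.continuous_ofReal.tendsto 1).mono_left nhdsWithin_le_nhds
    have := hcont.div hden one_ne_zero
    simp only [div_one] at this
    exact Tendsto.congr' (hev.mono fun x hx => hx.symm) this
  have : L = Complex.log (1 + z) := tendsto_nhds_unique hAbel hAbel2
  rw [this] at hL'
  exact hL'


lemma two_pi_I_ne_zero' : (2 * (Real.pi : ℂ) * I) ≠ 0 := by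
  simp [Real.pi_ne_zero, Complex.I_ne_zero]

lemma exp_geom_sum (N k : ℕ) (hN : 0 < N) :
    ∑ j ∈ range N, Complex.exp (2 * Real.pi * I * k / N) ^ j
      = if N ∣ k then (N : ℂ) else 0 := by
  have hNne : (N : ℂ) ≠ 0 := Nat.cast_ne_zero.mpr hN.ne'
  by_cases hd : N ∣ k
  · obtain ⟨t, rfl⟩ := hd
    have harg : 2 * (Real.pi : ℂ) * I * (N * t : ℕ) / N = (t : ℂ) * (2 * Real.pi * I) := by
      push_cast
      field_simp
    rw [harg, if_pos ⟨t, rfl⟩]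
    have h1 : Complex.exp ((t : ℂ) * (2 * Real.pi * I)) = 1 := by
      have := Complex.exp_int_mul_two_pi_mul_I (t : ℤ)
      simpa using this
    simp [h1]
  · have h1 : Complex.exp (2 * Real.pi * I * k / N) ≠ 1 := by
      intro h1
      obtain ⟨t, ht⟩ := Complex.exp_eq_one_iff.mp h1
      have h2 : (2 * (Real.pi : ℂ) * I) * (k : ℂ) = (2 * (Real.pi : ℂ) * I) * ((t : ℂ) * N) := by
        field_simp at ht
        linear_combination (2 * (Real.pi : ℂ) * I) * ht
      have h3 : (k : ℂ) = (t : ℂ) * N := mul_left_cancel₀ two_pi_I_ne_zero' h2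
      have h4 : (k : ℤ) = t * N := by exact_mod_cast h3
      exact hd (Int.ofNat_dvd.mp ⟨t, by rw [h4, mul_comm]⟩)
    rw [if_neg hd, geom_sum_eq h1]
    have hpow : Complex.exp (2 * Real.pi * I * k / N) ^ N = 1 := by
      rw [← Complex.exp_nat_mul]
      have harg : (N : ℂ) * (2 * Real.pi * I * k / N) = (k : ℂ) * (2 * Real.pi * I) := by
        field_simp
      rw [harg]
      have := Complex.exp_int_mul_two_pi_mul_I (k : ℤ)
      simpa using this
    rw [hpow]
    simp



lemma Klt (n M k : ℕ) :
    k < (M - n + (2 * n + 1) - 1) / (2 * n + 1) ↔ n + k * (2 * n + 1) < M := by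
  rw [Nat.lt_iff_add_one_le, Nat.le_div_iff_mul_le (by omega : 0 < 2 * n + 1), add_one_mul]
  obtain ⟨v, hv⟩ : ∃ v, k * (2 * n + 1) = v := ⟨_, rfl⟩
  rw [hv]
  omega

lemma filter_eq_image (n M : ℕ) :
    (Finset.range M).filter (fun m => (2 * n + 1) ∣ (n + m + 1))
      = (Finset.range ((M - n + (2 * n + 1) - 1) / (2 * n + 1))).image
          (fun k => n + k * (2 * n + 1)) := by
  ext m
  simp only [Finset.mem_filter, Finset.mem_image, Finset.mem_range]
  constructor
  · rintro ⟨hm, t, ht⟩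
    match t, ht with
    | 0, ht => omega
    | s + 1, ht =>
      have ht' : n + m + 1 = (2 * n + 1) * s + (2 * n + 1) := by
        rw [ht, Nat.mul_succ]
      obtain ⟨u, hu⟩ : ∃ u, (2 * n + 1) * s = u := ⟨_, rfl⟩
      rw [hu] at ht'
      refine ⟨s, ?_, ?_⟩
      · rw [Klt, mul_comm, hu]; omega
      · rw [mul_comm, hu]; omega
  · rintro ⟨k, hk, rfl⟩
    rw [Klt] at hk
    exact ⟨hk, ⟨k + 1, by ring⟩⟩

lemma K_tendsto (n : ℕ) :
    Filter.Tendsto (fun M => (M - n + (2 * n + 1) - 1) / (2 * n + 1)) Filter.atTop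
      Filter.atTop := by
  apply Filter.tendsto_atTop_atTop.mpr
  intro B
  refine ⟨n + (B + 1) * (2 * n + 1) + 1, fun M hM => ?_⟩
  have h1 : n + B * (2 * n + 1) < M := by
    have : B * (2 * n + 1) ≤ (B + 1) * (2 * n + 1) := Nat.mul_le_mul_right _ (by omega)
    omega
  exact le_of_lt ((Klt n M B).mpr h1)

end Aux

open Filter Topology Set in
theorem finite_sum_log_digamma (n : ℕ) (hn : 0 < n) :
    ∑ j ∈ Finset.range (2 * n + 1),
      (-1 : ℂ) ^ j * Complex.exp (-(Real.pi * I * j) / (2 * n + 1)) *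
        Complex.log (1 + Complex.exp (2 * Real.pi * I * j / (2 * n + 1)))
    = -(1 / 2) * (-1 : ℂ) ^ n *
        (_root_.digamma (((n : ℂ) + 1) / (4 * n + 2)) - _root_.digamma ((3 * (n : ℂ) + 2) / (4 * n + 2))) := by
  classical
  have h2n1 : (2 * (n : ℂ) + 1) ≠ 0 := by
    have : ((2 * n + 1 : ℕ) : ℂ) ≠ 0 := Nat.cast_ne_zero.mpr (by omega)
    push_cast at this
    exact this
  have hNR : (0 : ℝ) < (2 * n + 1 : ℕ) := by positivity
  set a : ℝ := (n + 1 : ℝ) / (2 * n + 1 : ℕ) with hadef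
  have ha : 0 < a := by
    rw [hadef]
    positivity
  set T : ℕ → ℂ := fun M => ∑ j ∈ Finset.range (2 * n + 1),
      (-1 : ℂ) ^ j * Complex.exp (-(Real.pi * I * j) / (2 * n + 1)) *
        ∑ m ∈ range M, (-1 : ℂ) ^ m *
          Complex.exp (2 * Real.pi * I * j / (2 * n + 1)) ^ (m + 1) / ((m : ℂ) + 1) with hTdef
  -- Step 1 : T tends to the LHS
  have hT1 : Tendsto T atTop (𝓝 (∑ j ∈ Finset.range (2 * n + 1),
      (-1 : ℂ) ^ j * Complex.exp (-(Real.pi * I * j) / (2 * n + 1)) *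
        Complex.log (1 + Complex.exp (2 * Real.pi * I * j / (2 * n + 1))))) := by
    apply tendsto_finset_sum
    intro j hj
    apply Tendsto.const_mul
    have harg : 2 * (Real.pi : ℂ) * I * j / (2 * n + 1)
        = ((2 * Real.pi * j / (2 * n + 1) : ℝ) : ℂ) * I := by
      push_cast
      field_simp
    apply log_series_boundary
    · rw [harg]
      exact Complex.norm_exp_ofReal_mul_I _
    · rw [harg]
      intro hcon
      rw [show (-1 : ℂ) = Complex.exp (Real.pi * I) by rw [Complex.exp_pi_mul_I]] at hcon
      obtain ⟨t, ht⟩ := Complex.exp_eq_exp_iff_exists_int.mp hcon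
      have h2 : ((Real.pi : ℂ) * I) * (2 * (j : ℂ))
          = ((Real.pi : ℂ) * I) * ((2 * n + 1) + 2 * t * (2 * n + 1)) := by
        push_cast at ht
        field_simp at ht
        linear_combination ((Real.pi : ℂ) * I) * ht
      have hpiI : ((Real.pi : ℂ) * I) ≠ 0 := by
        simp [Real.pi_ne_zero, Complex.I_ne_zero]
      have h3 := mul_left_cancel₀ hpiI h2
      have h4 : (2 * (j : ℤ)) = (2 * n + 1) + 2 * t * (2 * n + 1) := by exact_mod_cast h3
      have h5 : (2 * (j : ℤ)) = (2 * n + 1) * (2 * t + 1) := by linear_combination h4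
      have heven : Even (2 * (j : ℤ)) := ⟨j, by ring⟩
      have hodd : Odd ((2 * (n : ℤ) + 1) * (2 * t + 1)) :=
        Odd.mul ⟨n, by ring⟩ ⟨t, by ring⟩
      rw [h5] at heven
      exact (Int.not_odd_iff_even.mpr heven) hodd
  -- Step 2: closed form of T
  set K : ℕ → ℕ := fun M => (M - n + (2 * n + 1) - 1) / (2 * n + 1) with hKdef
  set S : ℕ → ℝ := fun Kk => ∑ k ∈ range Kk, (-1 : ℝ) ^ k / (a + k) with hSdef
  have hT2 : ∀ M, T M = (-1 : ℂ) ^ n * ((S (K M) : ℝ) : ℂ) := by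
    intro M
    simp only [hTdef]
    have e1 : ∀ j ∈ Finset.range (2 * n + 1),
        (-1 : ℂ) ^ j * Complex.exp (-(Real.pi * I * j) / (2 * n + 1)) *
          ∑ m ∈ range M, (-1 : ℂ) ^ m *
            Complex.exp (2 * Real.pi * I * j / (2 * n + 1)) ^ (m + 1) / ((m : ℂ) + 1)
        = ∑ m ∈ range M, ((-1 : ℂ) ^ m / ((m : ℂ) + 1)) *
            Complex.exp (2 * Real.pi * I * ((n + m + 1 : ℕ) : ℂ) / ((2 * n + 1 : ℕ) : ℂ)) ^ j := by
      intro j _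
      rw [Finset.mul_sum]
      refine Finset.sum_congr rfl fun m _ => ?_
      have h1 : ((-1 : ℂ)) ^ j = Complex.exp ((j : ℂ) * (Real.pi * I)) := by
        rw [Complex.exp_nat_mul, Complex.exp_pi_mul_I]
      have h2 : Complex.exp (2 * Real.pi * I * j / (2 * n + 1)) ^ (m + 1)
          = Complex.exp (((m + 1 : ℕ) : ℂ) * (2 * Real.pi * I * j / (2 * n + 1))) := by
        rw [Complex.exp_nat_mul]
      have h3 : Complex.exp (2 * Real.pi * I * ((n + m + 1 : ℕ) : ℂ) / ((2 * n + 1 : ℕ) : ℂ)) ^ j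
          = Complex.exp ((j : ℂ) *
              (2 * Real.pi * I * ((n + m + 1 : ℕ) : ℂ) / ((2 * n + 1 : ℕ) : ℂ))) := by
        rw [Complex.exp_nat_mul]
      have key : Complex.exp ((j : ℂ) * (Real.pi * I)) *
            Complex.exp (-(Real.pi * I * j) / (2 * n + 1)) *
            Complex.exp (((m + 1 : ℕ) : ℂ) * (2 * Real.pi * I * j / (2 * n + 1)))
          = Complex.exp ((j : ℂ) *
              (2 * Real.pi * I * ((n + m + 1 : ℕ) : ℂ) / ((2 * n + 1 : ℕ) : ℂ))) := by
        rw [← Complex.exp_add, ← Complex.exp_add]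
        congr 1
        push_cast
        field_simp
        ring
      rw [h1, h2, h3]
      linear_combination ((-1 : ℂ) ^ m / ((m : ℂ) + 1)) * key
    rw [Finset.sum_congr rfl e1, Finset.sum_comm]
    have e2 : ∀ m ∈ range M,
        (∑ j ∈ Finset.range (2 * n + 1), ((-1 : ℂ) ^ m / ((m : ℂ) + 1)) *
            Complex.exp (2 * Real.pi * I * ((n + m + 1 : ℕ) : ℂ) / ((2 * n + 1 : ℕ) : ℂ)) ^ j)
        = if (2 * n + 1) ∣ (n + m + 1) then
            (((2 * n + 1 : ℕ) : ℂ) * ((-1 : ℂ) ^ m / ((m : ℂ) + 1))) else 0 := by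
      intro m _
      rw [← Finset.mul_sum, exp_geom_sum (2 * n + 1) (n + m + 1) (by omega)]
      split_ifs with h
      · ring
      · ring
    rw [Finset.sum_congr rfl e2, ← Finset.sum_filter, filter_eq_image n M,
      Finset.sum_image (fun k₁ _ k₂ _ h => Nat.eq_of_mul_eq_mul_right (by omega)
        (Nat.add_left_cancel h))]
    rw [hSdef]
    push_cast [Finset.mul_sum]
    refine Finset.sum_congr rfl fun k hk => ?_
    have hodd : ((-1 : ℂ)) ^ (2 * n + 1) = -1 := Odd.neg_one_pow ⟨n, by omega⟩
    have hsign : ((-1 : ℂ)) ^ (n + k * (2 * n + 1)) = (-1) ^ n * (-1) ^ k := by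
      rw [pow_add, mul_comm k, pow_mul, hodd]
    rw [hsign]
    have hd1 : ((n : ℂ) + ((k * (2 * n + 1) : ℕ) : ℂ) + 1) ≠ 0 := by
      have : (((n + k * (2 * n + 1) + 1 : ℕ)) : ℂ) ≠ 0 := Nat.cast_ne_zero.mpr (by omega)
      push_cast at this ⊢
      exact this
    have hak : (0 : ℝ) < a + k := by positivity
    have hd2 : ((a : ℝ) + (k : ℝ) : ℝ) ≠ 0 := hak.ne'
    rw [hadef] at hd2 ⊢
    push_cast at hd2 ⊢
    field_simp
    ring
  -- Step 3: conclude
  have hK : Tendsto K atTop atTop := K_tendsto n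
  have hlim2 : Tendsto T atTop (𝓝 ((-1 : ℂ) ^ n *
      ((((psiR ((a + 1) / 2) - psiR (a / 2)) / 2 : ℝ)) : ℂ))) := by
    have h1 : Tendsto (fun M => ((S (K M) : ℝ) : ℂ)) atTop
        (𝓝 ((((psiR ((a + 1) / 2) - psiR (a / 2)) / 2 : ℝ)) : ℂ)) :=
      (Complex.continuous_ofReal.tendsto _).comp ((S_tendsto ha).comp hK)
    exact (h1.const_mul _).congr fun M => (hT2 M).symm
  have hmain := tendsto_nhds_unique hT1 hlim2
  rw [hmain]
  have h4n2 : (4 * (n : ℂ) + 2) ≠ 0 := by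
    have : ((4 * n + 2 : ℕ) : ℂ) ≠ 0 := Nat.cast_ne_zero.mpr (by omega)
    push_cast at this
    exact this
  have harg1 : (((n : ℂ) + 1) / (4 * n + 2)) = ((a / 2 : ℝ) : ℂ) := by
    rw [hadef]
    push_cast
    rw [div_div]
    congr 1
    ring
  have harg2 : ((3 * (n : ℂ) + 2) / (4 * n + 2)) = (((a + 1) / 2 : ℝ) : ℂ) := by
    rw [hadef]
    push_cast
    rw [div_add_one h2n1, div_div, div_eq_div_iff h4n2 (mul_ne_zero h2n1 two_ne_zero)]
    ring
  rw [harg1, harg2, digamma_ofReal (by positivity), digamma_ofReal (by positivity)]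
  push_cast
  ring
end
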